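/- Fix a nest N and a projection N₀ ∈ N. If (S_i)_{i∈ℕ} is a countable chain (under inclusion) of countable sets of operators, each of Type-S with respect to (N, N₀), then the union ⋃_{i∈ℕ} S_i is also of Type-S. -/

import Mathlib

noncomputable section

universe u

variable {H : Type u} [NormedAddCommGroup H] [InnerProductSpace ℂ H] [CompleteSpace H]
  [TopologicalSpace.SeparableSpace H]

/-- A nest: a linearly ordered set of orthogonal projections containing `0` and `1`. -/
structure Nest (H : Type u) [NormedAddCommGroup H] [InnerProductSpace ℂ H]
    [CompleteSpace H] where
  carrier : Set (H →L[ℂ] H)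
  isProj : ∀ P ∈ carrier, IsSelfAdjoint P ∧ P * P = P
  zero_mem : (0 : H →L[ℂ] H) ∈ carrier
  one_mem : (1 : H →L[ℂ] H) ∈ carrier
  chain : ∀ P ∈ carrier, ∀ Q ∈ carrier, Q * P = P ∨ P * Q = Q

/-- Order on projections: `P ≤ Q` iff `ran P ⊆ ran Q`. -/
def projLE (P Q : H →L[ℂ] H) : Prop := Q * P = P

/-- Strict order on projections. -/
def projLT (P Q : H →L[ℂ] H) : Prop := projLE P Q ∧ P ≠ Q

/-- The nest algebra: all bounded operators leaving invariant the range of every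
projection in the nest, i.e. `(1 - P) X P = 0` for every `P` in the nest. -/
def nestAlgebra (𝒩 : Nest H) : Subalgebra ℂ (H →L[ℂ] H) where
  carrier := {X | ∀ P ∈ 𝒩.carrier, (1 - P) * X * P = 0}
  mul_mem' := by
    intro X Y hX hY P hP
    have hX' := hX P hP
    have hY' := hY P hP
    have hYP : Y * P = P * (Y * P) := by
      have h : (1 - P) * Y * P + P * Y * P = Y * P := by noncomm_ring
      rw [hY', zero_add] at h
      rw [← mul_assoc]; exact h.symm
    calc (1 - P) * (X * Y) * P = (1 - P) * X * (Y * P) := by noncomm_ring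
      _ = (1 - P) * X * (P * (Y * P)) := by rw [← hYP]
      _ = ((1 - P) * X * P) * (Y * P) := by noncomm_ring
      _ = 0 := by rw [hX', zero_mul]
  one_mem' := by
    intro P hP
    have h := (𝒩.isProj P hP).2
    calc (1 - P) * 1 * P = P - P * P := by noncomm_ring
      _ = 0 := by rw [h, sub_self]
  add_mem' := by
    intro X Y hX hY P hP
    have hX' := hX P hP
    have hY' := hY P hP
    calc (1 - P) * (X + Y) * P = (1 - P) * X * P + (1 - P) * Y * P := by noncomm_ring
      _ = 0 := by rw [hX', hY', add_zero]
  zero_mem' := by intro P hP; simp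
  algebraMap_mem' := by
    intro c P hP
    have h := (𝒩.isProj P hP).2
    have h1 : (1 - P) * 1 * P = 0 := by
      calc (1 - P) * 1 * P = P - P * P := by noncomm_ring
        _ = 0 := by rw [h, sub_self]
    calc (1 - P) * (algebraMap ℂ (H →L[ℂ] H) c) * P
        = (1 - P) * (c • (1 : H →L[ℂ] H)) * P := by rw [Algebra.algebraMap_eq_smul_one]
      _ = c • ((1 - P) * 1 * P) := by rw [mul_smul_comm, smul_mul_assoc]
      _ = 0 := by rw [h1, smul_zero]

/-- A set `S` of operators is of Type-S with respect to `(𝒩, N₀)`: there is a strictly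
increasing sequence `N_n` in `𝒩` converging strongly to `N₀` and unit vectors
`x_n = (N_{n+1} - N_n) x_n` such that `X x_n → 0` and `X* x_n → 0` for every `X ∈ S`. -/
def TypeS (𝒩 : Nest H) (N₀ : H →L[ℂ] H) (S : Set (H →L[ℂ] H)) : Prop :=
  ∃ (Nf : ℕ → H →L[ℂ] H) (x : ℕ → H),
    (∀ n, Nf n ∈ 𝒩.carrier) ∧ (∀ n, projLT (Nf n) (Nf (n + 1))) ∧
    (∀ n, projLT (Nf n) N₀) ∧
    (∀ h : H, Filter.Tendsto (fun n => Nf n h) Filter.atTop (nhds (N₀ h))) ∧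
    (∀ n, ‖x n‖ = 1) ∧ (∀ n, (Nf (n + 1) - Nf n) (x n) = x n) ∧
    ∀ X ∈ S, Filter.Tendsto (fun n => X (x n)) Filter.atTop (nhds 0) ∧
      Filter.Tendsto (fun n => (ContinuousLinearMap.adjoint X) (x n))
        Filter.atTop (nhds 0)


/-!
Enumerate the countable union as `X₀, X₁, …` and fix a dense sequence `d₀, d₁, …` in `H`.
Since the `Sᵢ` form a chain, `X₀, …, Xₙ` all lie in one `Sᵢ`, and the Type-S data of that `Sᵢ`
let us step from the current projection `P < N₀` to a larger `Q = M_{k+1} < N₀`, where `k` is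
so large that `P ≤ M_k`, the vector `y_k` nearly annihilates `X₀, …, Xₙ` and their adjoints, and
`M_{k+1}` is close to `N₀` at `d₀, …, dₙ`. Iterating gives the required sequence; strong
convergence on the dense sequence suffices because projections have norm at most one.
-/

open Filter Topology

theorem exists_seq_of_forall_exists {α β : Type*} {p : α → Prop} {r : ℕ → α → α → β → Prop}
    {a₀ : α} (h₀ : p a₀) (h : ∀ n a, p a → ∃ b y, p b ∧ r n a b y) :
    ∃ (a : ℕ → α) (y : ℕ → β), ∀ n, p (a n) ∧ r n (a n) (a (n + 1)) (y n) := by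
  choose next out hnext hr using h
  let s : ℕ → {a // p a} := fun n =>
    Nat.rec ⟨a₀, h₀⟩ (fun n a => ⟨next n a a.2, hnext n a a.2⟩) n
  exact ⟨fun n => (s n).1, fun n => out n (s n).1 (s n).2,
    fun n => ⟨(s n).2, hr n (s n).1 (s n).2⟩⟩

theorem tendsto_of_eventually_dist_lt_one_div {X : Type*} [PseudoMetricSpace X] {u : ℕ → X}
    {a : X} (h : ∀ᶠ n in atTop, dist (u n) a < 1 / ((n : ℝ) + 1)) :
    Tendsto u atTop (𝓝 a) :=
  tendsto_iff_dist_tendsto_zero.2 <| squeeze_zero' (.of_forall fun _ => dist_nonneg)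
    (h.mono fun _ => le_of_lt) tendsto_one_div_add_atTop_nhds_zero_nat

theorem ContinuousLinearMap.tendsto_apply_of_denseRange {𝕜 E F ι α : Type*}
    [NontriviallyNormedField 𝕜] [NormedAddCommGroup E] [NormedSpace 𝕜 E]
    [NormedAddCommGroup F] [NormedSpace 𝕜 F] {l : Filter ι} {T : ι → E →L[𝕜] F}
    {T₀ : E →L[𝕜] F} {C : ℝ} (hT : ∀ i, ‖T i‖ ≤ C) {d : α → E} (hd : DenseRange d)
    (hlim : ∀ a, Tendsto (fun i => T i (d a)) l (𝓝 (T₀ (d a)))) (v : E) :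
    Tendsto (fun i => T i v) l (𝓝 (T₀ v)) :=
  have hequi : Equicontinuous ((↑) ∘ T) :=
    ((NormedSpace.equicontinuous_TFAE T).out 5 1 : (∃ C, ∀ i, ‖T i‖ ≤ C) ↔ _).mp ⟨C, hT⟩
  hd.induction_on v (hequi.isClosed_setOfPred_tendsto T₀.continuous) hlim

section Projections

variable {H : Type u} [NormedAddCommGroup H] [InnerProductSpace ℂ H] {P Q M : H →L[ℂ] H}

theorem projLE.trans (hPQ : projLE P Q) (hQM : projLE Q M) : projLE P M := by
  unfold projLE at *
  rw [← hPQ, ← mul_assoc, hQM]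

theorem projLE_of_le {M : ℕ → H →L[ℂ] H} (hidem : ∀ k, M k * M k = M k)
    (hM : ∀ k, projLE (M k) (M (k + 1))) {k l : ℕ} (hkl : k ≤ l) : projLE (M k) (M l) := by
  induction l, hkl using Nat.le_induction with
  | base => exact hidem k
  | succ l _ ih => exact ih.trans (hM l)

variable [CompleteSpace H]

theorem projLE.mul_eq_left (hP : IsSelfAdjoint P) (hQ : IsSelfAdjoint Q) (h : projLE P Q) :
    P * Q = P := by
  simpa only [star_mul, hP.star_eq, hQ.star_eq] using congrArg star h

theorem projLE_antisymm (hP : IsSelfAdjoint P) (hQ : IsSelfAdjoint Q) (hPQ : projLE P Q)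
    (hQP : projLE Q P) : P = Q :=
  (hPQ.mul_eq_left hP hQ).symm.trans hQP

theorem projLE.trans_projLT (hPM : projLE P M) (hMQ : projLT M Q) (hM : IsSelfAdjoint M)
    (hQ : IsSelfAdjoint Q) : projLT P Q :=
  ⟨hPM.trans hMQ.1, fun hPQ => hMQ.2 (projLE_antisymm hM hQ hMQ.1 (hPQ ▸ hPM))⟩

theorem sub_apply_eq_self_of_projLE (hP : IsSelfAdjoint P) (hM : IsSelfAdjoint M)
    (hQ : IsSelfAdjoint Q) (hQQ : Q * Q = Q) (hPM : projLE P M) (hMQ : projLE M Q) {y : H}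
    (hy : (Q - M) y = y) : (Q - P) y = y := by
  have key : (Q - P) * (Q - M) = Q - M := by
    have hPQ := (hPM.trans hMQ).mul_eq_left hP hQ
    have hPM' := hPM.mul_eq_left hP hM
    calc (Q - P) * (Q - M) = Q * Q - Q * M - P * Q + P * M := by noncomm_ring
      _ = Q - M := by rw [hQQ, hMQ, hPQ, hPM']; abel
  calc (Q - P) y = (Q - P) ((Q - M) y) := by rw [hy]
    _ = y := (DFunLike.congr_fun key y).trans hy

namespace Nest

variable (𝒩 : Nest H)

theorem isStarProjection (hP : P ∈ 𝒩.carrier) : IsStarProjection P :=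
  ⟨(𝒩.isProj P hP).2, (𝒩.isProj P hP).1⟩

theorem norm_le_one (hP : P ∈ 𝒩.carrier) : ‖P‖ ≤ 1 :=
  (𝒩.isStarProjection hP).norm_le

theorem exists_projLE_of_tendsto {N₀ : H →L[ℂ] H} {M : ℕ → H →L[ℂ] H}
    (hM : ∀ k, M k ∈ 𝒩.carrier) (hlim : ∀ v, Tendsto (fun k => M k v) atTop (𝓝 (N₀ v)))
    (hN₀ : N₀ ∈ 𝒩.carrier) (hP : P ∈ 𝒩.carrier) (hPN₀ : projLT P N₀) :
    ∃ k, projLE P (M k) := by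
  by_contra! h
  have hMP : ∀ k, projLE (M k) P := fun k => (𝒩.chain P hP (M k) (hM k)).resolve_left (h k)
  have hN₀P : projLE N₀ P := ContinuousLinearMap.ext fun v =>
    tendsto_nhds_unique (((P.continuous.tendsto _).comp (hlim v)).congr
      fun k => DFunLike.congr_fun (hMP k) v) (hlim v)
  exact hPN₀.2 (projLE_antisymm (𝒩.isProj P hP).1 (𝒩.isProj N₀ hN₀).1 hPN₀.1 hN₀P)

end Nest

end Projections

section TypeS

variable {H : Type u} [NormedAddCommGroup H] [InnerProductSpace ℂ H] [CompleteSpace H]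
  {𝒩 : Nest H} {N₀ : H →L[ℂ] H} {S T : Set (H →L[ℂ] H)}

theorem TypeS.subset (hT : TypeS 𝒩 N₀ T) (hST : S ⊆ T) : TypeS 𝒩 N₀ S := by
  obtain ⟨M, y, hM, hMM, hMN₀, hlim, hy, hMy, hTy⟩ := hT
  exact ⟨M, y, hM, hMM, hMN₀, hlim, hy, hMy, fun X hX => hTy X (hST hX)⟩

theorem TypeS.exists_step (hS : TypeS 𝒩 N₀ S) (hSfin : S.Finite) (hN₀ : N₀ ∈ 𝒩.carrier)
    {P : H →L[ℂ] H} (hP : P ∈ 𝒩.carrier) (hPN₀ : projLT P N₀) {V : Set H} (hV : V.Finite)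
    {ε : ℝ} (hε : 0 < ε) :
    ∃ (Q : H →L[ℂ] H) (x : H), (Q ∈ 𝒩.carrier ∧ projLT Q N₀) ∧ projLT P Q ∧ ‖x‖ = 1 ∧
      (Q - P) x = x ∧
      (∀ X ∈ S, ‖X x‖ < ε ∧ ‖ContinuousLinearMap.adjoint X x‖ < ε) ∧
      ∀ v ∈ V, dist (Q v) (N₀ v) < ε := by
  obtain ⟨M, y, hM, hMM, hMN₀, hlim, hy, hMy, hSy⟩ := hS
  have hsa : ∀ k, IsSelfAdjoint (M k) := fun k => (𝒩.isProj _ (hM k)).1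
  obtain ⟨k₀, hk₀⟩ := 𝒩.exists_projLE_of_tendsto hM hlim hN₀ hP hPN₀
  have hsmall : ∀ᶠ k in atTop,
      ∀ X ∈ S, ‖X (y k)‖ < ε ∧ ‖ContinuousLinearMap.adjoint X (y k)‖ < ε := by
    refine (eventually_all_finite hSfin).2 fun X hX => ?_
    simpa only [dist_zero_right] using
      (Metric.tendsto_nhds.1 (hSy X hX).1 ε hε).and (Metric.tendsto_nhds.1 (hSy X hX).2 ε hε)
  have hclose : ∀ᶠ k in atTop, ∀ v ∈ V, dist (M (k + 1) v) (N₀ v) < ε :=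
    (eventually_all_finite hV).2 fun v _ =>
      Metric.tendsto_nhds.1 ((hlim v).comp (tendsto_add_atTop_nat 1)) ε hε
  obtain ⟨k, hk, hsk, hck⟩ := ((eventually_ge_atTop k₀).and (hsmall.and hclose)).exists
  have hPk : projLE P (M k) :=
    hk₀.trans (projLE_of_le (fun k => (𝒩.isProj _ (hM k)).2) (fun k => (hMM k).1) hk)
  exact ⟨M (k + 1), y k, ⟨hM _, hMN₀ _⟩, hPk.trans_projLT (hMM k) (hsa k) (hsa (k + 1)), hy k,
    sub_apply_eq_self_of_projLE (𝒩.isProj P hP).1 (hsa k) (hsa (k + 1))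
      (𝒩.isProj _ (hM _)).2 hPk (hMM k).1 (hMy k), hsk, hck⟩

theorem typeS_of_countable_of_forall_finite [TopologicalSpace.SeparableSpace H]
    (hN₀ : N₀ ∈ 𝒩.carrier) (hS : S.Countable) (hfin : ∀ F ⊆ S, F.Finite → TypeS 𝒩 N₀ F) :
    TypeS 𝒩 N₀ S := by
  obtain ⟨f, hf⟩ := Set.countable_iff_exists_subset_range.mp hS
  let d := TopologicalSpace.denseSeq H
  obtain ⟨M, -, hM, -, hMN₀, -⟩ := hfin ∅ (Set.empty_subset S) Set.finite_empty
  have step : ∀ (n : ℕ) (P : H →L[ℂ] H), P ∈ 𝒩.carrier ∧ projLT P N₀ →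
      ∃ (Q : H →L[ℂ] H) (x : H), (Q ∈ 𝒩.carrier ∧ projLT Q N₀) ∧ projLT P Q ∧ ‖x‖ = 1 ∧
        (Q - P) x = x ∧
        (∀ X ∈ S ∩ f '' Set.Iic n, ‖X x‖ < 1 / ((n : ℝ) + 1) ∧
          ‖ContinuousLinearMap.adjoint X x‖ < 1 / ((n : ℝ) + 1)) ∧
        ∀ v ∈ d '' Set.Iic n, dist (Q v) (N₀ v) < 1 / ((n : ℝ) + 1) := fun n P hP =>
    have hfinite := ((Set.finite_Iic n).image f).inter_of_right S
    (hfin _ Set.inter_subset_left hfinite).exists_step hfinite hN₀ hP.1 hP.2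
      ((Set.finite_Iic n).image d) Nat.one_div_pos_of_nat
  obtain ⟨N, x, hN⟩ := exists_seq_of_forall_exists ⟨hM 0, hMN₀ 0⟩ step
  refine ⟨N, x, fun n => (hN n).1.1, fun n => (hN n).2.1, fun n => (hN n).1.2, ?_,
    fun n => (hN n).2.2.1, fun n => (hN n).2.2.2.1, ?_⟩
  · refine ContinuousLinearMap.tendsto_apply_of_denseRange (fun n => 𝒩.norm_le_one (hN n).1.1)
      (TopologicalSpace.denseRange_denseSeq H) fun j => ?_
    refine (tendsto_add_atTop_iff_nat 1).1 (tendsto_of_eventually_dist_lt_one_div ?_)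
    filter_upwards [eventually_ge_atTop j] with n hn
    exact (hN n).2.2.2.2.2 _ ⟨j, hn, rfl⟩
  · rintro X hX
    obtain ⟨j, rfl⟩ := hf hX
    have hsmall : ∀ᶠ n in atTop, ‖f j (x n)‖ < 1 / ((n : ℝ) + 1) ∧
        ‖ContinuousLinearMap.adjoint (f j) (x n)‖ < 1 / ((n : ℝ) + 1) :=
      (eventually_ge_atTop j).mono fun n hn => (hN n).2.2.2.2.1 _ ⟨hX, j, hn, rfl⟩
    simp only [← dist_zero_right] at hsmall
    exact ⟨tendsto_of_eventually_dist_lt_one_div (hsmall.mono fun _ => And.left),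
      tendsto_of_eventually_dist_lt_one_div (hsmall.mono fun _ => And.right)⟩

end TypeS

/-- the union of a countable chain of countable Type-S sets is Type-S. -/
theorem statement14 (𝒩 : Nest H) (N₀ : H →L[ℂ] H) (hN₀ : N₀ ∈ 𝒩.carrier)
    (S : ℕ → Set (H →L[ℂ] H)) (hcount : ∀ i, (S i).Countable)
    (hchain : ∀ i j, S i ⊆ S j ∨ S j ⊆ S i) (hS : ∀ i, TypeS 𝒩 N₀ (S i)) :
    TypeS 𝒩 N₀ (⋃ i, S i) := by
  have hdir : Directed (· ⊆ ·) S := fun i j =>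
    (hchain i j).elim (fun h => ⟨j, h, subset_rfl⟩) fun h => ⟨i, subset_rfl, h⟩
  refine typeS_of_countable_of_forall_finite hN₀ (Set.countable_iUnion hcount)
    fun F hF hFfin => ?_
  obtain ⟨i, hi⟩ := hdir.exists_mem_subset_of_finset_subset_biUnion (s := hFfin.toFinset)
    (by rwa [Set.Finite.coe_toFinset])
  exact (hS i).subset (by rwa [Set.Finite.coe_toFinset] at hi)
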